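/- Let (p_θ)_{θ ∈ Θ} be a family of probability density functions on ℝ^d with respect to Lebesgue measure, and let p_data be a probability density on ℝ^d. Assume that for all θ, θ' ∈ Θ the integrals ∫ log p_{θ'}(x) p_data(x) dx and ∫ log p_{θ'}(x) p_θ(x) dx exist (are finite). If θ* ∈ Θ satisfies ∫ log p_{θ*}(x) p_data(x) dx ≥ ∫ log p_{θ'}(x) p_data(x) dx for all θ' ∈ Θ, then for every λ > 0 and every θ' ∈ Θ: ∫ log p_{θ*}(x) p_data(x) dx + λ ∫ log p_{θ*}(x) p_{θ*}(x) dx ≥ ∫ log p_{θ'}(x) p_data(x) dx + λ ∫ log p_{θ'}(x) p_{θ*}(x) dx. In other words, θ* is a global maximizer of the mixed objective θ' ↦ E_{p_data}[log p_{θ'}] + λ E_{p_{θ*}}[log p_{θ'}]. -/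
import Mathlib


open MeasureTheory

/-- **The optimal generative model is a fixed point of iterative retraining.** Let
`(p_θ)_{θ ∈ Θ}` be a family of (positive) probability densities on `ℝ^d` and `p_data` a
probability density, with all the relevant expected log-likelihood integrals finite. If `θ*`
maximizes `θ' ↦ ∫ log p_{θ'} · p_data`, then for every `λ > 0`, `θ*` is a global maximizer
of the mixed objective `θ' ↦ ∫ log p_{θ'} · p_data + λ ∫ log p_{θ'} · p_{θ*}`. -/
theorem optimal_model_is_fixed_point {d : ℕ} {Θ : Type*}
    (p : Θ → (Fin d → ℝ) → ℝ) (pdata : (Fin d → ℝ) → ℝ)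
    (hp_meas : ∀ θ, Measurable (p θ))
    (hp_pos : ∀ θ x, 0 < p θ x)
    (hp_int : ∀ θ, ∫ x, p θ x = 1)
    (hdata_meas : Measurable pdata)
    (hdata_nonneg : ∀ x, 0 ≤ pdata x)
    (hdata_int : ∫ x, pdata x = 1)
    (hint_data : ∀ θ', Integrable fun x => Real.log (p θ' x) * pdata x)
    (hint_model : ∀ θ θ', Integrable fun x => Real.log (p θ' x) * p θ x)
    (θs : Θ)
    (hθs : ∀ θ', (∫ x, Real.log (p θ' x) * pdata x) ≤
      ∫ x, Real.log (p θs x) * pdata x)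
    (lam : ℝ) (hlam : 0 < lam) :
    ∀ θ' : Θ,
      (∫ x, Real.log (p θ' x) * pdata x) + lam * ∫ x, Real.log (p θ' x) * p θs x ≤
      (∫ x, Real.log (p θs x) * pdata x) + lam * ∫ x, Real.log (p θs x) * p θs x := by
  intro θ'
  -- integrability of the densities themselves
  have hint_p : ∀ θ, Integrable (p θ) := by
    intro θ
    by_contra h
    have h1 := hp_int θ
    rw [integral_undef h] at h1
    exact one_ne_zero h1.symm
  -- Gibbs' inequality
  have gibbs : (∫ x, Real.log (p θ' x) * p θs x) ≤ ∫ x, Real.log (p θs x) * p θs x := by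
    have key : (∫ x, Real.log (p θ' x) * p θs x - Real.log (p θs x) * p θs x) ≤
        ∫ x, (p θ' x - p θs x) := by
      apply integral_mono ((hint_model θs θ').sub (hint_model θs θs))
        ((hint_p θ').sub (hint_p θs))
      intro x
      have hb := hp_pos θs x
      have ha := hp_pos θ' x
      have hlog : Real.log (p θ' x) - Real.log (p θs x) ≤ p θ' x / p θs x - 1 := by
        rw [← Real.log_div ha.ne' hb.ne']
        have := Real.log_le_sub_one_of_pos (div_pos ha hb)
        linarith
      have : (Real.log (p θ' x) - Real.log (p θs x)) * p θs x ≤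
          (p θ' x / p θs x - 1) * p θs x :=
        mul_le_mul_of_nonneg_right hlog hb.le
      calc Real.log (p θ' x) * p θs x - Real.log (p θs x) * p θs x
          = (Real.log (p θ' x) - Real.log (p θs x)) * p θs x := by ring
        _ ≤ (p θ' x / p θs x - 1) * p θs x := this
        _ = p θ' x - p θs x := by field_simp
    rw [integral_sub (hint_model θs θ') (hint_model θs θs),
      integral_sub (hint_p θ') (hint_p θs), hp_int, hp_int] at key
    linarith
  have h1 := hθs θ'
  nlinarith [mul_le_mul_of_nonneg_left gibbs hlam.le]
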